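/- arXiv:1801.00734 — 6 statements merged into one kernel-verified Lean document; each statement's English description precedes it below -/
import Mathlib

section
/- In a two-player zero-sum game with payoff matrix A ∈ ℝ^{m×n}, the maximum over mixed strategies x of the minimum over mixed strategies y of xᵀAy equals the minimum over y of the maximum over x of xᵀAy. -/
/-!
The payoff `x ⬝ᵥ A *ᵥ y` is bilinear, hence continuous, convex and concave in each variable, and
the two simplices are nonempty compact convex sets. Sion's minimax theorem therefore provides a
saddle point `(y₀, x₀)`, and at a saddle point both `⨆ ⨅` and `⨅ ⨆` equal the payoff at it.
-/

open Matrix Set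

section SaddlePoint

variable {E F : Type*} {X : Set E} {Y : Set F} {f : E → F → ℝ} {a : E} {b : F}

theorem IsSaddlePointOn.ciInf_ciSup_eq (h : IsSaddlePointOn X Y f a b) (ha : a ∈ X) (hb : b ∈ Y)
    (hbdd : ∀ x ∈ X, BddAbove (f x '' Y)) :
    ⨅ x : X, ⨆ y : Y, f x y = f a b := by
  have : Nonempty X := ⟨⟨a, ha⟩⟩
  have : Nonempty Y := ⟨⟨b, hb⟩⟩
  have hsup_ge (x : X) : f a b ≤ ⨆ y : Y, f x y :=
    (h x x.2 b hb).trans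
      (le_ciSup (f := fun y : Y => f x y) (by simpa only [image_eq_range] using hbdd x x.2) ⟨b, hb⟩)
  have hbddBelow : BddBelow (range fun x : X => ⨆ y : Y, f x y) := by
    refine ⟨f a b, ?_⟩
    rintro _ ⟨x, rfl⟩
    exact hsup_ge x
  exact le_antisymm ((ciInf_le hbddBelow ⟨a, ha⟩).trans (ciSup_le fun y => h a ha y y.2))
    (le_ciInf hsup_ge)

theorem IsSaddlePointOn.ciSup_ciInf_eq (h : IsSaddlePointOn X Y f a b) (ha : a ∈ X) (hb : b ∈ Y)
    (hbdd : ∀ y ∈ Y, BddBelow ((f · y) '' X)) :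
    ⨆ y : Y, ⨅ x : X, f x y = f a b := by
  have : Nonempty X := ⟨⟨a, ha⟩⟩
  have : Nonempty Y := ⟨⟨b, hb⟩⟩
  have hinf_le (y : Y) : ⨅ x : X, f x y ≤ f a b :=
    (ciInf_le (f := fun x : X => f x y) (by simpa only [image_eq_range] using hbdd y y.2)
      ⟨a, ha⟩).trans (h a ha y y.2)
  have hbddAbove : BddAbove (range fun y : Y => ⨅ x : X, f x y) := by
    refine ⟨f a b, ?_⟩
    rintro _ ⟨y, rfl⟩
    exact hinf_le y
  exact le_antisymm (ciSup_le hinf_le)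
    ((le_ciInf fun x : X => h x x.2 b hb).trans (le_ciSup hbddAbove ⟨b, hb⟩))

end SaddlePoint

section MatrixGame

variable {ι κ : Type*} [Fintype ι] [Fintype κ] (A : Matrix ι κ ℝ)

theorem Matrix.continuous_dotProduct_mulVec_left (y : κ → ℝ) :
    Continuous fun x : ι → ℝ => x ⬝ᵥ A *ᵥ y :=
  continuous_id.dotProduct continuous_const

theorem Matrix.continuous_dotProduct_mulVec_right (x : ι → ℝ) :
    Continuous fun y : κ → ℝ => x ⬝ᵥ A *ᵥ y :=
  continuous_const.dotProduct (continuous_const.matrix_mulVec continuous_id)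

-- `IsSaddlePointOn` minimizes over its first argument, so the column player's strategy comes first.
theorem Matrix.exists_isSaddlePointOn_stdSimplex [Nonempty ι] [Nonempty κ] :
    ∃ y ∈ stdSimplex ℝ κ, ∃ x ∈ stdSimplex ℝ ι,
      IsSaddlePointOn (stdSimplex ℝ κ) (stdSimplex ℝ ι) (fun y x => x ⬝ᵥ A *ᵥ y) y x := by
  classical
  refine Sion.exists_isSaddlePointOn (nonempty_coe_sort.mp inferInstance) (convex_stdSimplex ℝ κ)
    (isCompact_stdSimplex ℝ κ)
    (fun x _ =>
      (A.continuous_dotProduct_mulVec_right x).lowerSemicontinuous.lowerSemicontinuousOn _)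
    (fun x _ => ?_) (convex_stdSimplex ℝ ι) (nonempty_coe_sort.mp inferInstance)
    (isCompact_stdSimplex ℝ ι)
    (fun y _ =>
      (A.continuous_dotProduct_mulVec_left y).upperSemicontinuous.upperSemicontinuousOn _)
    (fun y _ => ?_)
  · rw [← funext (toLinearMap₂'_apply' A x)]
    exact ((toLinearMap₂' ℝ A x).convexOn (convex_stdSimplex ℝ κ)).quasiconvexOn
  · rw [← funext fun x => toLinearMap₂'_apply' A x y]
    exact (((toLinearMap₂' ℝ A).flip y).concaveOn (convex_stdSimplex ℝ ι)).quasiconcaveOn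

end MatrixGame

/-- The Minimax Theorem for two-player zero-sum games: the max over mixed strategies `x`
of the min over mixed strategies `y` of `xᵀAy` equals the min over `y` of the max over `x`. -/
theorem minimax_theorem (m n : ℕ) (hm : 0 < m) (hn : 0 < n)
    (A : Matrix (Fin m) (Fin n) ℝ) :
    (⨆ x : stdSimplex ℝ (Fin m), ⨅ y : stdSimplex ℝ (Fin n),
        (x : Fin m → ℝ) ⬝ᵥ A.mulVec (y : Fin n → ℝ)) =
    (⨅ y : stdSimplex ℝ (Fin n), ⨆ x : stdSimplex ℝ (Fin m),
        (x : Fin m → ℝ) ⬝ᵥ A.mulVec (y : Fin n → ℝ)) := by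
  have : Nonempty (Fin m) := Fin.pos_iff_nonempty.mp hm
  have : Nonempty (Fin n) := Fin.pos_iff_nonempty.mp hn
  obtain ⟨y, hy, x, hx, hsaddle⟩ := A.exists_isSaddlePointOn_stdSimplex
  have hbddBelow (x : Fin m → ℝ) : BddBelow ((fun y => x ⬝ᵥ A *ᵥ y) '' stdSimplex ℝ (Fin n)) :=
    (isCompact_stdSimplex ℝ _).bddBelow_image (A.continuous_dotProduct_mulVec_right x).continuousOn
  have hbddAbove (y : Fin n → ℝ) : BddAbove ((fun x => x ⬝ᵥ A *ᵥ y) '' stdSimplex ℝ (Fin m)) :=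
    (isCompact_stdSimplex ℝ _).bddAbove_image (A.continuous_dotProduct_mulVec_left y).continuousOn
  exact (hsaddle.ciSup_ciInf_eq hy hx fun x _ => hbddBelow x).trans
    (hsaddle.ciInf_ciSup_eq hy hx fun y _ => hbddAbove y).symm
end

section
/- Fix ε > 0 and an n × n bimatrix game (A, B) with all payoffs in [-1,1]. Let (x*, y*) be a Nash equilibrium. If x̂ and ŷ are mixed strategies such that the expected payoff of every pure strategy against ŷ (respectively, against x̂) differs from its expected payoff against y* (respectively, x*) by at most ε/2 in absolute value, and the supports of x̂ and ŷ are contained in the supports of x* and y* respectively, then (x̂, ŷ) is an ε-approximate Nash equilibrium. -/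
open Matrix

-- generic weighted-average lemmas
lemma dot_le_of_ptwise {n : ℕ} (w g h : Fin n → ℝ) (c : ℝ)
    (hw : w ∈ stdSimplex ℝ (Fin n)) (hgh : ∀ i, g i ≤ h i + c) :
    w ⬝ᵥ g ≤ w ⬝ᵥ h + c := by
  have h1 : w ⬝ᵥ g ≤ w ⬝ᵥ (fun i => h i + c) := by
    apply Finset.sum_le_sum
    intro i _
    exact mul_le_mul_of_nonneg_left (hgh i) (hw.1 i)
  have h2 : w ⬝ᵥ (fun i => h i + c) = w ⬝ᵥ h + c := by
    simp only [dotProduct, mul_add, Finset.sum_add_distrib, ← Finset.sum_mul, hw.2, one_mul]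
  linarith

lemma pure_le {n : ℕ} (g : Fin n → ℝ) (w : Fin n → ℝ)
    (hle : ∀ x ∈ stdSimplex ℝ (Fin n), x ⬝ᵥ g ≤ w ⬝ᵥ g) (i : Fin n) :
    g i ≤ w ⬝ᵥ g := by
  have hmem : (fun j => if j = i then (1:ℝ) else 0) ∈ stdSimplex ℝ (Fin n) := by
    constructor
    · intro j; dsimp; split <;> norm_num
    · simp
  have := hle _ hmem
  simpa [dotProduct, ite_mul, Finset.sum_ite_eq'] using this

lemma support_eq_value {n : ℕ} (g : Fin n → ℝ) (w : Fin n → ℝ)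
    (hw : w ∈ stdSimplex ℝ (Fin n))
    (hle : ∀ i, g i ≤ w ⬝ᵥ g) (i : Fin n) (hi : w i ≠ 0) :
    g i = w ⬝ᵥ g := by
  set v := w ⬝ᵥ g with hv
  have hsum : ∑ j, w j * (v - g j) = 0 := by
    simp only [mul_sub, Finset.sum_sub_distrib, ← Finset.sum_mul]
    rw [hw.2]
    simp [hv, dotProduct]
  have hnn : ∀ j ∈ Finset.univ, 0 ≤ w j * (v - g j) := fun j _ =>
    mul_nonneg (hw.1 j) (by linarith [hle j])
  have := (Finset.sum_eq_zero_iff_of_nonneg hnn).mp hsum i (Finset.mem_univ i)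
  rcases mul_eq_zero.mp this with h | h
  · exact absurd h hi
  · linarith

lemma support_dot_eq {n : ℕ} (g : Fin n → ℝ) (w u : Fin n → ℝ)
    (hw : w ∈ stdSimplex ℝ (Fin n)) (hu : u ∈ stdSimplex ℝ (Fin n))
    (hle : ∀ i, g i ≤ w ⬝ᵥ g) (hsupp : ∀ i, u i ≠ 0 → w i ≠ 0) :
    u ⬝ᵥ g = w ⬝ᵥ g := by
  have : ∀ i, u i * g i = u i * (w ⬝ᵥ g) := by
    intro i
    by_cases h : u i = 0
    · simp [h]
    · rw [support_eq_value g w hw hle i (hsupp i h)]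
  calc u ⬝ᵥ g = ∑ i, u i * (w ⬝ᵥ g) := Finset.sum_congr rfl (fun i _ => this i)
    _ = (∑ i, u i) * (w ⬝ᵥ g) := by rw [Finset.sum_mul]
    _ = w ⬝ᵥ g := by rw [hu.2, one_mul]

/-- Sampling lemma for sparse approximate Nash equilibria (key step of
Lipton–Markakis–Mehta): in an `n × n` bimatrix game `(A, B)` with payoffs in `[-1,1]`,
if `(xs, ys)` is a Nash equilibrium and `(xh, yh)` are mixed strategies whose supports
are contained in those of `xs` and `ys`, and such that every pure strategy's expected
payoff against `yh` (resp. `xh`) is within `ε/2` of its expected payoff against `ys`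
(resp. `xs`), then `(xh, yh)` is an `ε`-approximate Nash equilibrium. -/
theorem approx_nash_of_close_payoffs (n : ℕ) (ε : ℝ) (hε : 0 < ε)
    (A B : Matrix (Fin n) (Fin n) ℝ)
    (hA : ∀ i j, |A i j| ≤ 1) (hB : ∀ i j, |B i j| ≤ 1)
    (xs ys : Fin n → ℝ)
    (hxs : xs ∈ stdSimplex ℝ (Fin n)) (hys : ys ∈ stdSimplex ℝ (Fin n))
    (hNashA : ∀ x ∈ stdSimplex ℝ (Fin n), x ⬝ᵥ A.mulVec ys ≤ xs ⬝ᵥ A.mulVec ys)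
    (hNashB : ∀ y ∈ stdSimplex ℝ (Fin n), xs ⬝ᵥ B.mulVec y ≤ xs ⬝ᵥ B.mulVec ys)
    (xh yh : Fin n → ℝ)
    (hxh : xh ∈ stdSimplex ℝ (Fin n)) (hyh : yh ∈ stdSimplex ℝ (Fin n))
    (hApayoff : ∀ i, |A.mulVec yh i - A.mulVec ys i| ≤ ε / 2)
    (hBpayoff : ∀ j, |Matrix.vecMul xh B j - Matrix.vecMul xs B j| ≤ ε / 2)
    (hsuppx : ∀ i, xh i ≠ 0 → xs i ≠ 0)
    (hsuppy : ∀ j, yh j ≠ 0 → ys j ≠ 0) :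
    (∀ x ∈ stdSimplex ℝ (Fin n), x ⬝ᵥ A.mulVec yh - ε ≤ xh ⬝ᵥ A.mulVec yh) ∧
    (∀ y ∈ stdSimplex ℝ (Fin n), xh ⬝ᵥ B.mulVec y - ε ≤ xh ⬝ᵥ B.mulVec yh) := by
  have hApt₁ : ∀ i, A.mulVec yh i ≤ A.mulVec ys i + ε / 2 := fun i => by
    have := abs_le.mp (hApayoff i); linarith [this.2]
  have hApt₂ : ∀ i, A.mulVec ys i ≤ A.mulVec yh i + ε / 2 := fun i => by
    have := abs_le.mp (hApayoff i); linarith [this.1]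
  have hBpt₁ : ∀ j, Matrix.vecMul xh B j ≤ Matrix.vecMul xs B j + ε / 2 := fun j => by
    have := abs_le.mp (hBpayoff j); linarith [this.2]
  have hBpt₂ : ∀ j, Matrix.vecMul xs B j ≤ Matrix.vecMul xh B j + ε / 2 := fun j => by
    have := abs_le.mp (hBpayoff j); linarith [this.1]
  constructor
  · intro x hx
    have h1 : x ⬝ᵥ A.mulVec yh ≤ x ⬝ᵥ A.mulVec ys + ε / 2 :=
      dot_le_of_ptwise x _ _ _ hx hApt₁
    have h2 : x ⬝ᵥ A.mulVec ys ≤ xs ⬝ᵥ A.mulVec ys := hNashA x hx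
    have h3 : xh ⬝ᵥ A.mulVec ys = xs ⬝ᵥ A.mulVec ys :=
      support_dot_eq _ xs xh hxs hxh (pure_le _ _ hNashA) hsuppx
    have h4 : xh ⬝ᵥ A.mulVec ys ≤ xh ⬝ᵥ A.mulVec yh + ε / 2 :=
      dot_le_of_ptwise xh _ _ _ hxh hApt₂
    linarith
  · intro y hy
    have key : ∀ z, xh ⬝ᵥ B.mulVec z = z ⬝ᵥ Matrix.vecMul xh B := fun z => by
      rw [Matrix.dotProduct_mulVec, dotProduct_comm]
    have key' : ∀ z, xs ⬝ᵥ B.mulVec z = z ⬝ᵥ Matrix.vecMul xs B := fun z => by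
      rw [Matrix.dotProduct_mulVec, dotProduct_comm]
    have hNashB' : ∀ z ∈ stdSimplex ℝ (Fin n),
        z ⬝ᵥ Matrix.vecMul xs B ≤ ys ⬝ᵥ Matrix.vecMul xs B := fun z hz => by
      rw [← key', ← key']; exact hNashB z hz
    have h1 : y ⬝ᵥ Matrix.vecMul xh B ≤ y ⬝ᵥ Matrix.vecMul xs B + ε / 2 :=
      dot_le_of_ptwise y _ _ _ hy hBpt₁
    have h2 : y ⬝ᵥ Matrix.vecMul xs B ≤ ys ⬝ᵥ Matrix.vecMul xs B := hNashB' y hy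
    have h3 : yh ⬝ᵥ Matrix.vecMul xs B = ys ⬝ᵥ Matrix.vecMul xs B :=
      support_dot_eq _ ys yh hys hyh (pure_le _ _ hNashB') hsuppy
    have h4 : yh ⬝ᵥ Matrix.vecMul xs B ≤ yh ⬝ᵥ Matrix.vecMul xh B + ε / 2 :=
      dot_le_of_ptwise yh _ _ _ hyh hBpt₂
    rw [key y, key yh]
    linarith
end

section
/- Let k, m, t be positive integers. If t < (1/k)·e^{m/(2k²)}, then there exist t partitions P¹,…,Pᵗ of an m-element set M into k classes each, such that for all distinct indices j ≠ ℓ and all distinct players i ≠ i', the classes P^j_i and P^ℓ_{i'} intersect (an intersecting family). -/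
private lemma if_key_real (k m t : ℕ) (hk : 2 ≤ k) (ht : 0 < t)
    (h : (t : ℝ) < (1 / (k : ℝ)) * Real.exp ((m : ℝ) / (2 * (k : ℝ) ^ 2))) :
    (t:ℝ) * t * k * k * ((k:ℝ)*k - 1)^m < ((k:ℝ)*(k:ℝ))^m := by
  set K : ℝ := (k:ℝ) with hK
  have hK2 : (2:ℝ) ≤ K := by rw [hK]; exact_mod_cast hk
  have hKpos : (0:ℝ) < K := by linarith
  have hKK : (1:ℝ) < K * K := by nlinarith
  set x : ℝ := 1 / (K*K) with hx
  have hxpos : 0 < x := by positivity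
  have hx1 : x < 1 := by
    rw [hx, div_lt_one (by linarith)]; linarith
  have hexp : Real.exp ((m:ℝ) / (2 * K^2)) = Real.exp ((m:ℝ) * x / 2) := by
    congr 1; rw [hx]; ring
  have htpos : (0:ℝ) < t := by exact_mod_cast ht
  have hA : (t:ℝ) * t * K * K < Real.exp x ^ m := by
    have h2 : (t:ℝ) * K < Real.exp ((m:ℝ) * x / 2) := by
      rw [hexp] at h
      calc (t:ℝ) * K < (1/K * Real.exp ((m:ℝ)*x/2)) * K := by
            apply mul_lt_mul_of_pos_right h hKpos
        _ = Real.exp ((m:ℝ)*x/2) := by field_simp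
    have h3 : ((t:ℝ) * K) * ((t:ℝ)*K) < Real.exp ((m:ℝ)*x/2) * Real.exp ((m:ℝ)*x/2) := by
      have h0 : (0:ℝ) ≤ (t:ℝ) * K := by positivity
      exact mul_lt_mul'' h2 h2 h0 h0
    calc (t:ℝ) * t * K * K = ((t:ℝ)*K) * ((t:ℝ)*K) := by ring
      _ < Real.exp ((m:ℝ)*x/2) * Real.exp ((m:ℝ)*x/2) := h3
      _ = Real.exp ((m:ℝ)*x) := by rw [← Real.exp_add]; ring_nf
      _ = Real.exp x ^ m := by rw [← Real.exp_nat_mul]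
  have hB : Real.exp x * (K*K - 1) ≤ K*K := by
    have h1 : 1 - x ≤ Real.exp (-x) := by
      have := Real.add_one_le_exp (-x); linarith
    have h2 : (1 - x) * Real.exp x ≤ 1 := by
      have := mul_le_mul_of_nonneg_right h1 (Real.exp_pos x).le
      rwa [← Real.exp_add, neg_add_cancel, Real.exp_zero] at this
    have h3 : (1 - x) * (K*K) = K*K - 1 := by
      rw [hx]; field_simp
    nlinarith [Real.exp_pos x]
  have hKK1 : (0:ℝ) < K*K - 1 := by linarith
  calc (t:ℝ) * t * K * K * (K*K-1)^m
      < Real.exp x ^ m * (K*K-1)^m := by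
        exact mul_lt_mul_of_pos_right hA (by positivity)
    _ = (Real.exp x * (K*K-1))^m := by rw [mul_pow]
    _ ≤ (K*K)^m := by
        apply pow_le_pow_left₀ (by positivity) hB

private lemma if_count (k m t : ℕ) (j l : Fin t) (hjl : j ≠ l) (i i' : Fin k)
    (hii' : i ≠ i') :
    ((Finset.univ : Finset (Fin t → Fin m → Fin k)).filter
      (fun P => ∀ a, ¬(P j a = i ∧ P l a = i'))).card
      ≤ (k*k - 1)^m * k^(m*(t-2)) := by
  classical
  set β := ((Fin m → {p : Fin k × Fin k // p ≠ (i, i')}) ×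
    ({j' : Fin t // j' ≠ j ∧ j' ≠ l} → Fin m → Fin k)) with hβ
  have hcard : Fintype.card β = (k*k - 1)^m * k^(m*(t-2)) := by
    have h1 : Fintype.card {p : Fin k × Fin k // p ≠ (i, i')} = k*k - 1 := by
      have : Fintype.card {p : Fin k × Fin k // ¬ p ∈ ({(i,i')} : Finset (Fin k × Fin k))} =
          k*k - 1 := by
        rw [Fintype.card_subtype_compl]
        simp [Fintype.card_prod]
      simpa using this
    have h2 : Fintype.card {j' : Fin t // j' ≠ j ∧ j' ≠ l} = t - 2 := by
      rw [Fintype.card_subtype]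
      have : (Finset.univ.filter fun j' : Fin t => j' ≠ j ∧ j' ≠ l)
          = Finset.univ \ {j, l} := by
        ext x; simp [not_or]
      rw [this, Finset.card_sdiff_of_subset (Finset.subset_univ _), Finset.card_pair hjl,
        Finset.card_univ, Fintype.card_fin]
    simp only [hβ, Fintype.card_prod, Fintype.card_fun, h1, h2, Fintype.card_fin]
    ring
  rw [← hcard, ← Finset.card_univ]
  have hfb : ((i', i') : Fin k × Fin k) ≠ (i, i') := fun hc =>
    hii' (congrArg Prod.fst hc).symm
  set f : (Fin t → Fin m → Fin k) → β := fun P =>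
    ((fun a => if hc : (P j a, P l a) = (i, i') then ⟨(i', i'), hfb⟩
        else ⟨(P j a, P l a), hc⟩),
      fun j' a => P j'.1 a) with hf
  apply Finset.card_le_card_of_injOn f (fun P _ => Finset.mem_univ _)
  intro P hP Q hQ hPQ
  have hPm := (Finset.mem_filter.mp hP).2
  have hQm := (Finset.mem_filter.mp hQ).2
  funext j'' a
  have h1 := congrFun (congrArg Prod.fst hPQ) a
  have h2 := congrFun (congrArg Prod.snd hPQ)
  simp only [hf] at h1 h2
  rw [dif_neg (fun hc : (P j a, P l a) = (i,i') =>
      hPm a ⟨congrArg Prod.fst hc, congrArg Prod.snd hc⟩),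
    dif_neg (fun hc : (Q j a, Q l a) = (i,i') =>
      hQm a ⟨congrArg Prod.fst hc, congrArg Prod.snd hc⟩)] at h1
  have h1' : (P j a, P l a) = (Q j a, Q l a) := congrArg Subtype.val h1
  by_cases hj : j'' = j
  · subst hj; exact congrArg Prod.fst h1'
  by_cases hl : j'' = l
  · subst hl; exact congrArg Prod.snd h1'
  exact congrFun (h2 ⟨j'', hj, hl⟩) a

/-- Existence of an intersecting family of partitions: for positive integers `k, m, t`
with `t < (1/k)·e^{m/(2k²)}`, there exist `t` partitions of an `m`-element set into `k`
labeled classes each (encoded as functions `Fin m → Fin k`) such that any two classes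
taken from distinct partitions and with distinct labels intersect. -/
theorem intersecting_family_exists (k m t : ℕ) (hk : 0 < k) (hm : 0 < m) (ht : 0 < t)
    (h : (t : ℝ) < (1 / (k : ℝ)) * Real.exp ((m : ℝ) / (2 * (k : ℝ) ^ 2))) :
    ∃ P : Fin t → Fin m → Fin k,
      ∀ j l : Fin t, j ≠ l → ∀ i i' : Fin k, i ≠ i' →
        ∃ a : Fin m, P j a = i ∧ P l a = i' := by
  classical
  -- trivial cases
  by_cases hk1 : k = 1
  · subst hk1
    refine ⟨fun _ _ => 0, fun j l _ i i' hii' => absurd (Subsingleton.elim i i') hii'⟩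
  by_cases ht1 : t = 1
  · subst ht1
    refine ⟨fun _ _ => ⟨0, hk⟩, fun j l hjl i i' _ =>
      absurd (Subsingleton.elim j l) hjl⟩
  have hk2 : 2 ≤ k := by omega
  have ht2 : 2 ≤ t := by omega
  -- the bad sets
  set S : Finset (Fin t × Fin t × Fin k × Fin k) :=
    Finset.univ.filter (fun q => q.1 ≠ q.2.1 ∧ q.2.2.1 ≠ q.2.2.2) with hS
  set B : Fin t × Fin t × Fin k × Fin k → Finset (Fin t → Fin m → Fin k) :=
    fun q => Finset.univ.filter
      (fun P => ∀ a, ¬(P q.1 a = q.2.2.1 ∧ P q.2.1 a = q.2.2.2)) with hB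
  set Bad : Finset (Fin t → Fin m → Fin k) :=
    Finset.univ.filter (fun P => ¬ (∀ j l : Fin t, j ≠ l → ∀ i i' : Fin k, i ≠ i' →
      ∃ a : Fin m, P j a = i ∧ P l a = i')) with hBad
  have hsub : Bad ⊆ S.biUnion B := by
    intro P hP
    have hP' := (Finset.mem_filter.mp hP).2
    push_neg at hP'
    obtain ⟨j, l, hjl, i, i', hii', hno⟩ := hP'
    refine Finset.mem_biUnion.mpr ⟨(j, l, i, i'), ?_, ?_⟩
    · simp [hS, hjl, hii']
    · simp only [hB, Finset.mem_filter, Finset.mem_univ, true_and]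
      intro a hc
      exact (hno a hc.1) hc.2
  -- cardinality bounds
  have hBound : ∀ q ∈ S, (B q).card ≤ (k*k - 1)^m * k^(m*(t-2)) := by
    intro q hq
    have hq' := (Finset.mem_filter.mp hq).2
    exact if_count k m t q.1 q.2.1 hq'.1 q.2.2.1 q.2.2.2 hq'.2
  have hScard : S.card ≤ t * t * (k * k) := by
    calc S.card ≤ (Finset.univ : Finset (Fin t × Fin t × Fin k × Fin k)).card :=
          Finset.card_filter_le _ _
      _ = t * t * (k * k) := by
          simp [Finset.card_univ, Fintype.card_prod]; ring
  have hBadCard : Bad.card ≤ t * t * (k * k) * ((k*k - 1)^m * k^(m*(t-2))) := by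
    calc Bad.card ≤ (S.biUnion B).card := Finset.card_le_card hsub
      _ ≤ ∑ q ∈ S, (B q).card := Finset.card_biUnion_le
      _ ≤ ∑ _q ∈ S, ((k*k - 1)^m * k^(m*(t-2))) := Finset.sum_le_sum hBound
      _ = S.card * ((k*k - 1)^m * k^(m*(t-2))) := by rw [Finset.sum_const, smul_eq_mul]
      _ ≤ t * t * (k * k) * ((k*k - 1)^m * k^(m*(t-2))) :=
          Nat.mul_le_mul_right _ hScard
  -- the key strict inequality
  have hnat : t * t * (k*k) * (k*k - 1)^m < (k*k)^m := by
    have h1 : (1:ℕ) ≤ k*k := by nlinarith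
    have key := if_key_real k m t hk2 ht h
    have : ((t * t * (k*k) * (k*k - 1)^m : ℕ) : ℝ) < (((k*k)^m : ℕ) : ℝ) := by
      push_cast [Nat.cast_sub h1]
      calc (t:ℝ) * t * ((k:ℝ)*k) * ((k:ℝ)*k - 1)^m
          = (t:ℝ) * t * k * k * ((k:ℝ)*k - 1)^m := by ring
        _ < ((k:ℝ)*(k:ℝ))^m := key
    exact_mod_cast this
  have hstrict : Bad.card < Fintype.card (Fin t → Fin m → Fin k) := by
    obtain ⟨s, rfl⟩ : ∃ s, t = s + 2 := ⟨t - 2, by omega⟩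
    have htotal : Fintype.card (Fin (s+2) → Fin m → Fin k) = k ^ (m * (s+2)) := by
      simp [Fintype.card_fun, ← pow_mul]
    rw [htotal]
    have hts : (s + 2) - 2 = s := by omega
    calc Bad.card ≤ (s+2) * (s+2) * (k * k) * ((k*k - 1)^m * k^(m*s)) := by
          exact hBadCard
      _ = ((s+2) * (s+2) * (k*k) * (k*k - 1)^m) * k^(m*s) := by ring
      _ < (k*k)^m * k^(m*s) := by
          exact (Nat.mul_lt_mul_right (pow_pos hk _)).mpr hnat
      _ = k ^ (m * (s+2)) := by
          rw [show k*k = k^2 by ring, ← pow_mul, ← pow_add]; congr 1; ring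
  -- extract a good P
  have hne : (Finset.univ \ Bad).Nonempty := by
    rw [← Finset.card_pos, Finset.card_sdiff_of_subset (Finset.subset_univ _), Finset.card_univ]
    omega
  obtain ⟨P, hP⟩ := hne
  rw [Finset.mem_sdiff] at hP
  have := hP.2
  simp only [hBad, Finset.mem_filter, Finset.mem_univ, true_and, not_not] at this
  exact ⟨P, this⟩
end

section
/- Let B = A₁ × ⋯ × A_k with A_i ⊆ {0,1}ⁿ be a combinatorial box that contains no 'totally intersecting' input (a tuple (x₁,…,x_k) with a coordinate ℓ where every x_i has a 1). Then the number of tuples in B that are 'totally disjoint' (pairwise disjoint as sets) is at most kⁿ. -/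
/-- If a combinatorial box `A₁ × ⋯ × A_k` (with `A_i ⊆ {0,1}ⁿ`) contains no totally
intersecting input (a tuple with some coordinate where every player's string has a 1),
then it contains at most `kⁿ` totally disjoint tuples (tuples that are pairwise disjoint
as sets). -/
theorem box_few_disjoint_inputs (k n : ℕ) (A : Fin k → Set (Fin n → Bool))
    (hno : ¬ ∃ x : Fin k → Fin n → Bool,
      (∀ i, x i ∈ A i) ∧ ∃ l : Fin n, ∀ i, x i l = true) :
    Nat.card {x : Fin k → Fin n → Bool //
      (∀ i, x i ∈ A i) ∧
      ∀ i i' : Fin k, i ≠ i' → ∀ l : Fin n, ¬(x i l = true ∧ x i' l = true)} ≤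
    k ^ n := by
  classical
  rcases Nat.eq_zero_or_pos k with hk | hk
  · subst hk
    rcases Nat.eq_zero_or_pos n with hn | hn
    · subst hn
      calc Nat.card {x : Fin 0 → Fin 0 → Bool //
            (∀ i, x i ∈ A i) ∧
            ∀ i i' : Fin 0, i ≠ i' → ∀ l : Fin 0, ¬(x i l = true ∧ x i' l = true)}
          ≤ Nat.card (Fin 0 → Fin 0 → Bool) :=
            Nat.card_le_card_of_injective _ Subtype.val_injective
        _ ≤ 0 ^ 0 := by simp [Nat.card_eq_fintype_card]
    · exact absurd ⟨fun i => Fin.elim0 i, fun i => Fin.elim0 i,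
        ⟨0, hn⟩, fun i => Fin.elim0 i⟩ hno
  · -- for each coordinate, some player's set has all zeros there
    have hbad : ∀ l : Fin n, ∃ i : Fin k, ∀ y ∈ A i, y l = false := by
      intro l
      by_contra h
      push_neg at h
      choose y hy hyl using h
      exact hno ⟨y, hy, l, fun i => by
        have := hyl i
        cases hb : y i l with
        | false => exact absurd hb this
        | true => rfl⟩
    choose bad hbad using hbad
    set T := {x : Fin k → Fin n → Bool //
      (∀ i, x i ∈ A i) ∧
      ∀ i i' : Fin k, i ≠ i' → ∀ l : Fin n, ¬(x i l = true ∧ x i' l = true)} with hT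
    let E : T → (Fin n → Fin k) := fun x l =>
      if h : ∃ i, x.1 i l = true then h.choose else bad l
    have char : ∀ (x : T) (i : Fin k) (l : Fin n),
        x.1 i l = true ↔ (E x l = i ∧ i ≠ bad l) := by
      intro x i l
      constructor
      · intro h
        have hex : ∃ j, x.1 j l = true := ⟨i, h⟩
        have hspec := hex.choose_spec
        have heq : hex.choose = i := by
          by_contra hne
          exact x.2.2 _ _ hne l ⟨hspec, h⟩
        have hne : i ≠ bad l := by
          intro hib
          have := hbad l (x.1 i) (by rw [hib]; exact x.2.1 (bad l))
          rw [h] at this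
          exact Bool.true_eq_false.mp this
        refine ⟨?_, hne⟩
        simp only [E, dif_pos hex, heq]
      · rintro ⟨hE, hne⟩
        by_cases hex : ∃ j, x.1 j l = true
        · have hspec := hex.choose_spec
          have : E x l = hex.choose := by simp only [E, dif_pos hex]
          rw [this] at hE
          rwa [← hE]
        · have : E x l = bad l := by simp only [E, dif_neg hex]
          rw [this] at hE
          exact absurd hE.symm hne
    have hinj : Function.Injective E := by
      intro x x' hxx
      apply Subtype.ext
      funext i l
      have h1 := char x i l
      have h2 := char x' i l
      rw [hxx] at h1
      cases hb : x.1 i l <;> cases hb' : x'.1 i l <;> simp_all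
    calc Nat.card T ≤ Nat.card (Fin n → Fin k) :=
          Nat.card_le_card_of_injective E hinj
      _ = k ^ n := by simp [Nat.card_eq_fintype_card]
end

section
/- Covering the set of 1-inputs (totally disjoint tuples) of the k-party MultiDisjointness function on n-bit inputs by combinatorial boxes that contain no 0-input (totally intersecting tuple) requires at least (1 + 1/k)ⁿ boxes. -/
/-!
A 1-input is the same thing as an assignment `σ → Option ι` sending each coordinate to the
party that owns it (if any), so there are `(k + 1)ⁿ` of them. A box without 0-inputs has, for
every coordinate `l`, a party `i` none of whose sets contains `l`; the assignments in the box
avoid the value `some i` at `l`, which leaves at most `kⁿ` of them.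
-/

open Finset

namespace MultiDisjointness

variable {ι σ : Type*}

def tupleOfAssignment [DecidableEq ι] (g : σ → Option ι) : ι → σ → Bool :=
  fun i l => decide (g l = some i)

theorem tupleOfAssignment_disjoint [DecidableEq ι] (g : σ → Option ι) (i i' : ι) (hne : i ≠ i')
    (l : σ) : ¬(tupleOfAssignment g i l = true ∧ tupleOfAssignment g i' l = true) := by
  rintro ⟨hi, hi'⟩
  simp only [tupleOfAssignment, decide_eq_true_eq] at hi hi'
  exact hne (Option.some_injective _ (hi.symm.trans hi'))

theorem exists_forall_eq_false_of_not_exists_common_true {A : ι → Set (σ → Bool)}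
    (hA : ¬ ∃ x : ι → σ → Bool, (∀ i, x i ∈ A i) ∧ ∃ l, ∀ i, x i l = true) (l : σ) :
    ∃ i, ∀ y ∈ A i, y l = false := by
  by_contra! h
  choose x hxA hxl using h
  exact hA ⟨x, hxA, l, fun i => by simpa using hxl i⟩

open Classical in
theorem card_assignments_in_box_le [Fintype ι] [Fintype σ] [DecidableEq ι]
    {A : ι → Set (σ → Bool)}
    (hA : ¬ ∃ x : ι → σ → Bool, (∀ i, x i ∈ A i) ∧ ∃ l, ∀ i, x i l = true) :
    #{g : σ → Option ι | ∀ i, tupleOfAssignment g i ∈ A i} ≤ Fintype.card ι ^ Fintype.card σ := by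
  choose blocked hblocked using exists_forall_eq_false_of_not_exists_common_true hA
  have hsub : ({g : σ → Option ι | ∀ i, tupleOfAssignment g i ∈ A i} : Finset _) ⊆
      Fintype.piFinset fun l => univ.erase (some (blocked l)) := by
    intro g hg
    simp only [mem_filter, mem_univ, true_and] at hg
    refine Fintype.mem_piFinset.2 fun l => mem_erase.2 ⟨fun hl => ?_, mem_univ _⟩
    simpa [tupleOfAssignment, hl] using hblocked l _ (hg (blocked l))
  calc _ ≤ #(Fintype.piFinset fun l => univ.erase (some (blocked l))) := card_le_card hsub
    _ = Fintype.card ι ^ Fintype.card σ := by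
      simp [Fintype.card_piFinset, card_erase_of_mem]

open Classical in
theorem pow_card_add_one_le_of_cover [Fintype ι] [Fintype σ] [DecidableEq ι]
    {β : Type*} [Fintype β]
    (A : β → ι → Set (σ → Bool))
    (hno : ∀ b, ¬ ∃ x : ι → σ → Bool, (∀ i, x i ∈ A b i) ∧ ∃ l, ∀ i, x i l = true)
    (hcover : ∀ g : σ → Option ι, ∃ b, ∀ i, tupleOfAssignment g i ∈ A b i) :
    (Fintype.card ι + 1) ^ Fintype.card σ ≤
      Fintype.card β * Fintype.card ι ^ Fintype.card σ := by
  calc (Fintype.card ι + 1) ^ Fintype.card σ = #(univ : Finset (σ → Option ι)) := by simp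
    _ ≤ #(univ.biUnion fun b => {g | ∀ i, tupleOfAssignment g i ∈ A b i}) :=
      card_le_card fun g _ => by simpa using hcover g
    _ ≤ ∑ b, #{g : σ → Option ι | ∀ i, tupleOfAssignment g i ∈ A b i} := card_biUnion_le
    _ ≤ ∑ _b : β, Fintype.card ι ^ Fintype.card σ :=
      sum_le_sum fun b _ => card_assignments_in_box_le (hno b)
    _ = _ := by simp

end MultiDisjointness

theorem one_add_one_div_pow_le_of_add_one_pow_le {k n T : ℕ} (h : (k + 1) ^ n ≤ T * k ^ n) :
    (1 + 1 / (k : ℝ)) ^ n ≤ T := by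
  rcases k.eq_zero_or_pos with rfl | hk
  · rcases n with _ | n <;> simp_all
  · have hk' : (0 : ℝ) < k := by exact_mod_cast hk
    rw [one_add_div hk'.ne', div_pow, div_le_iff₀ (pow_pos hk' n)]
    exact_mod_cast h

open MultiDisjointness in
theorem multidisjointness_cover_lower_bound_general (k n : ℕ)
    (T : ℕ) (A : Fin T → Fin k → Set (Fin n → Bool))
    (hno : ∀ b : Fin T, ¬ ∃ x : Fin k → Fin n → Bool,
      (∀ i, x i ∈ A b i) ∧ ∃ l : Fin n, ∀ i, x i l = true)
    (hcover : ∀ x : Fin k → Fin n → Bool,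
      (∀ i i' : Fin k, i ≠ i' → ∀ l : Fin n, ¬(x i l = true ∧ x i' l = true)) →
      ∃ b : Fin T, ∀ i, x i ∈ A b i) :
    (1 + 1 / (k : ℝ)) ^ n ≤ (T : ℝ) := by
  have h := pow_card_add_one_le_of_cover A hno fun g =>
    hcover (tupleOfAssignment g) (tupleOfAssignment_disjoint g)
  simp only [Fintype.card_fin] at h
  exact one_add_one_div_pow_le_of_add_one_pow_le h

/-- Covering the 1-inputs (totally disjoint tuples) of the `k`-party MultiDisjointness
function on `n`-bit inputs by combinatorial boxes containing no 0-input (totally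
intersecting tuple) requires at least `(1 + 1/k)ⁿ` boxes. -/
theorem multidisjointness_cover_lower_bound (k n : ℕ) (hk : 0 < k)
    (T : ℕ) (A : Fin T → Fin k → Set (Fin n → Bool))
    (hno : ∀ b : Fin T, ¬ ∃ x : Fin k → Fin n → Bool,
      (∀ i, x i ∈ A b i) ∧ ∃ l : Fin n, ∀ i, x i l = true)
    (hcover : ∀ x : Fin k → Fin n → Bool,
      (∀ i i' : Fin k, i ≠ i' → ∀ l : Fin n, ¬(x i l = true ∧ x i' l = true)) →
      ∃ b : Fin T, ∀ i, x i ∈ A b i) :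
    (1 + 1 / (k : ℝ)) ^ n ≤ (T : ℝ) :=
  multidisjointness_cover_lower_bound_general k n T A hno hcover
end

section
/- Necessity direction of Border's theorem: if an interim allocation rule {yᵢ(vᵢ)} is induced by a feasible ex post allocation rule {xᵢ(v⃗)} (with Σᵢ xᵢ(v⃗) ≤ 1 for all v⃗ and valuations drawn independently with probabilities fᵢ(vᵢ)), then for every choice of distinguished sets Sᵢ ⊆ Vᵢ, Σᵢ Σ_{vᵢ∈Sᵢ} fᵢ(vᵢ)·yᵢ(vᵢ) ≤ 1 - Πᵢ (1 - Σ_{vᵢ∈Sᵢ} fᵢ(vᵢ)). -/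
open Finset

/-- Necessity direction of Border's theorem: if an interim allocation rule `y` is
induced by a feasible ex post allocation rule `x` (with `Σᵢ xᵢ(v⃗) ≤ 1` for every
valuation profile, valuations drawn independently with mass functions `fᵢ`), then for
every choice of distinguished sets `Sᵢ ⊆ Vᵢ`,
`Σᵢ Σ_{vᵢ∈Sᵢ} fᵢ(vᵢ)·yᵢ(vᵢ) ≤ 1 - Πᵢ (1 - Σ_{vᵢ∈Sᵢ} fᵢ(vᵢ))`. -/
theorem border_necessity (n : ℕ) (V : Fin n → Type*)
    [∀ i, Fintype (V i)] [∀ i, DecidableEq (V i)]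
    (f : ∀ i, V i → ℝ) (hf0 : ∀ i v, 0 ≤ f i v) (hf1 : ∀ i, ∑ v, f i v = 1)
    (x : (∀ i, V i) → Fin n → ℝ)
    (hx0 : ∀ w i, 0 ≤ x w i) (hx1 : ∀ w, ∑ i, x w i ≤ 1)
    (y : ∀ i, V i → ℝ)
    (hy : ∀ i (v : V i), y i v =
      ∑ w ∈ Finset.univ.filter (fun w : ∀ j, V j => w i = v),
        (∏ j ∈ Finset.univ.erase i, f j (w j)) * x w i)
    (S : ∀ i, Finset (V i)) :
    ∑ i, ∑ v ∈ S i, f i v * y i v ≤ 1 - ∏ i, (1 - ∑ v ∈ S i, f i v) := by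
  classical
  set P : (∀ j, V j) → ℝ := fun w => ∏ j, f j (w j) with hP
  have hPnn : ∀ w, 0 ≤ P w := fun w => Finset.prod_nonneg fun j _ => hf0 j (w j)
  -- Step 1: rewrite each bidder's contribution as a sum over profiles.
  have step1 : ∀ i, ∑ v ∈ S i, f i v * y i v
      = ∑ w ∈ Finset.univ.filter (fun w : ∀ j, V j => w i ∈ S i), P w * x w i := by
    intro i
    rw [← Finset.sum_fiberwise_eq_sum_filter Finset.univ (S i) (fun w => w i)
      (fun w => P w * x w i)]
    refine Finset.sum_congr rfl fun v _ => ?_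
    rw [hy i v, Finset.mul_sum]
    refine Finset.sum_congr rfl fun w hw => ?_
    simp only [Finset.mem_filter] at hw
    rw [← mul_assoc]
    congr 1
    rw [← hw.2]
    exact (Finset.mul_prod_erase Finset.univ (fun j => f j (w j)) (Finset.mem_univ i))
  simp only [step1]
  -- Step 2: swap the order of summation.
  have step2 : ∑ i, ∑ w ∈ Finset.univ.filter (fun w : ∀ j, V j => w i ∈ S i), P w * x w i
      = ∑ w : ∀ j, V j, ∑ i ∈ Finset.univ.filter (fun i => w i ∈ S i), P w * x w i := by
    simp only [Finset.sum_filter]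
    exact Finset.sum_comm
  rw [step2]
  -- Step 3: pointwise bound by the indicator of "some bidder distinguished".
  have step3 : ∀ w : ∀ j, V j,
      ∑ i ∈ Finset.univ.filter (fun i => w i ∈ S i), P w * x w i
        ≤ if ∃ i, w i ∈ S i then P w else 0 := by
    intro w
    by_cases h : ∃ i, w i ∈ S i
    · simp only [h, if_true]
      rw [← Finset.mul_sum]
      calc P w * ∑ i ∈ Finset.univ.filter (fun i => w i ∈ S i), x w i
          ≤ P w * ∑ i, x w i :=
            mul_le_mul_of_nonneg_left (Finset.sum_le_sum_of_subset_of_nonneg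
              (Finset.filter_subset _ _) (fun i _ _ => hx0 w i)) (hPnn w)
        _ ≤ P w * 1 := mul_le_mul_of_nonneg_left (hx1 w) (hPnn w)
        _ = P w := mul_one _
    · simp only [h, if_false]
      push_neg at h
      rw [Finset.filter_false_of_mem (fun i _ => h i), Finset.sum_empty]
  refine le_trans (Finset.sum_le_sum fun w _ => step3 w) (le_of_eq ?_)
  -- Step 4: compute the probability that some bidder is distinguished.
  have htot : ∑ w : ∀ j, V j, P w = 1 := by
    have h := Finset.prod_univ_sum (fun i => (Finset.univ : Finset (V i)))
      (fun i v => f i v)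
    rw [Fintype.piFinset_univ] at h
    rw [hP, ← h]
    simp [hf1]
  have hcomp : ∑ w ∈ Fintype.piFinset (fun i => (S i)ᶜ), P w
      = ∏ i, (1 - ∑ v ∈ S i, f i v) := by
    rw [hP, ← Finset.prod_univ_sum]
    refine Finset.prod_congr rfl fun i _ => ?_
    have h := Finset.sum_compl_add_sum (S i) (f i)
    rw [hf1 i] at h
    linarith
  have hfilter : Finset.univ.filter (fun w : ∀ j, V j => ¬ ∃ i, w i ∈ S i)
      = Fintype.piFinset (fun i => (S i)ᶜ) := by
    ext w
    simp [Fintype.mem_piFinset]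
  have hsplit : ∀ w : ∀ j, V j,
      (if ∃ i, w i ∈ S i then P w else 0)
        = P w - (if ¬ ∃ i, w i ∈ S i then P w else 0) := by
    intro w; by_cases h : ∃ i, w i ∈ S i <;> simp [h]
  simp only [hsplit]
  rw [Finset.sum_sub_distrib, htot, ← Finset.sum_filter, hfilter, hcomp]
end
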